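/- Let F = f0 − (1/3)·q² ∈ ℂ[x0,x1,x2,x3]. A nonzero vector x ∈ ℂ⁴ satisfies ∇F(x) = 0 (all four partial derivatives vanish) if and only if x is a complex scalar multiple of a vector obtained from (1,1,1,0) by permuting the coordinates and changing signs of coordinates. Consequently the quartic surface {F = 0} ⊂ ℙ³(ℂ) has exactly 16 singular points, namely the points (±1 : ±1 : ±1 : 0) and their coordinate permutations; it is a Kummer surface with the maximal number 16 of nodes for a quartic. -/

import Mathlib

open MvPolynomial

noncomputable def q : MvPolynomial (Fin 4) ℂ := X 0 ^ 2 + X 1 ^ 2 + X 2 ^ 2 + X 3 ^ 2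
noncomputable def f0 : MvPolynomial (Fin 4) ℂ := X 0 ^ 4 + X 1 ^ 4 + X 2 ^ 4 + X 3 ^ 4

noncomputable def F : MvPolynomial (Fin 4) ℂ := f0 - C (1/3 : ℂ) * q ^ 2

/-!
Since `∂ᵢF = (4/3)·xᵢ·(3xᵢ² − q)`, at a critical point every coordinate is either `0` or
satisfies `3xᵢ² = q`. If `k` coordinates are nonzero, summing gives `q = (k/3)·q`, and `q ≠ 0`
since otherwise all coordinates vanish; so exactly three coordinates are nonzero and they share a
common square `c²`. To count the points of `ℙ³`, represent each by its unique vector whose first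
nonzero coordinate is `1`: for critical points this is a vector with entries in `{0, ±1}`, exactly
one of them zero, and there are `4 · 4 = 16` of those.
-/

open Finset

section SumOfSquares

variable {ι K : Type*} [Fintype ι] [Field K] [DecidableEq K]

lemma sum_sq_eq_card_mul_sq {x : ι → K} {c : K} (h : ∀ i, x i = 0 ∨ x i ^ 2 = c ^ 2) :
    ∑ i, x i ^ 2 = #{i | x i ≠ 0} * c ^ 2 := by
  have hsq : ∀ i, x i ^ 2 = if x i ≠ 0 then c ^ 2 else 0 := fun i => by
    rcases h i with h0 | h1
    · simp [h0]
    · by_cases hi : x i = 0 <;> simp [hi, h1]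
  simp only [hsq, ← sum_filter, sum_const, nsmul_eq_mul]

lemma forall_eq_zero_or_mul_sq_eq_sum_sq_iff [CharZero K] {m : ℕ} (hm : m ≠ 0) {x : ι → K}
    (hx : x ≠ 0) :
    (∀ i, x i = 0 ∨ m * x i ^ 2 = ∑ j, x j ^ 2) ↔
      ∃ c : K, (∀ i, x i = 0 ∨ x i ^ 2 = c ^ 2) ∧ #{i | x i ≠ 0} = m := by
  constructor
  · intro h
    obtain ⟨i₀, hi₀⟩ := Function.ne_iff.mp hx
    have hsum : m * x i₀ ^ 2 = ∑ j, x j ^ 2 := (h i₀).resolve_left hi₀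
    have hsq : ∀ i, x i = 0 ∨ x i ^ 2 = x i₀ ^ 2 := fun i =>
      (h i).imp_right fun hi => mul_left_cancel₀ (Nat.cast_ne_zero.mpr hm) (hi.trans hsum.symm)
    refine ⟨x i₀, hsq, ?_⟩
    have hc : x i₀ ^ 2 ≠ 0 := pow_ne_zero 2 hi₀
    rw [sum_sq_eq_card_mul_sq hsq] at hsum
    exact_mod_cast (mul_right_cancel₀ hc hsum).symm
  · rintro ⟨c, hsq, hcard⟩ i
    rw [sum_sq_eq_card_mul_sq hsq, hcard]
    exact (hsq i).imp_right (congrArg _)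

end SumOfSquares

section SignedPermutation

variable {K : Type*} [Field K]

lemma vec_1110_apply (j : Fin 4) : (![1, 1, 1, 0] : Fin 4 → K) j = if j = 3 then 0 else 1 := by
  fin_cases j <;> rfl

variable [DecidableEq K]

lemma exists_signed_perm_of_sq_eq {x : Fin 4 → K} (hx : x ≠ 0) {c : K}
    (hsq : ∀ i, x i = 0 ∨ x i ^ 2 = c ^ 2) (hcard : #{i | x i ≠ 0} = 3) :
    ∃ (c : K) (σ : Equiv.Perm (Fin 4)) (ε : Fin 4 → K),
      (∀ i, ε i = 1 ∨ ε i = -1) ∧ x = fun i => c * ε i * (![1, 1, 1, 0] : Fin 4 → K) (σ i) := by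
  have hc : c ≠ 0 := by
    rintro rfl
    exact hx (funext fun i => by simpa using hsq i)
  obtain ⟨k, hk⟩ : ∃ k, ∀ i, x i = 0 ↔ i = k := by
    have h1 : #{i | x i = 0} = 1 := by
      have := card_filter_add_card_filter_not (s := univ) (fun i => x i = 0)
      simp only [card_univ, Fintype.card_fin, hcard] at this
      omega
    obtain ⟨k, hk⟩ := card_eq_one.mp h1
    exact ⟨k, fun i => by simpa using congrArg (i ∈ ·) hk⟩
  have hσ : ∀ i, Equiv.swap k 3 i = 3 ↔ i = k := fun i => by
    rw [Equiv.swap_apply_eq_iff, Equiv.swap_apply_right]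
  refine ⟨c, Equiv.swap k 3, fun i => if i = k then 1 else x i / c, fun i => ?_, funext fun i => ?_⟩
  · dsimp only
    split_ifs with hik
    · exact Or.inl rfl
    · have hxi := (hsq i).resolve_left ((hk i).not.mpr hik)
      exact sq_eq_one_iff.mp (by rw [div_pow, hxi, div_self (pow_ne_zero 2 hc)])
  · simp only [vec_1110_apply, hσ]
    split_ifs with hik
    · simp [(hk i).mpr hik]
    · field_simp

lemma sq_eq_of_eq_signed_perm {x : Fin 4 → K} (hx : x ≠ 0) {c : K} {σ : Equiv.Perm (Fin 4)}
    {ε : Fin 4 → K} (hε : ∀ i, ε i = 1 ∨ ε i = -1)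
    (h : x = fun i => c * ε i * (![1, 1, 1, 0] : Fin 4 → K) (σ i)) :
    (∀ i, x i = 0 ∨ x i ^ 2 = c ^ 2) ∧ #{i | x i ≠ 0} = 3 := by
  have hc : c ≠ 0 := by rintro rfl; exact hx (by simp [h]; rfl)
  have hε0 : ∀ i, ε i ≠ 0 := fun i => by rcases hε i with h | h <;> simp [h]
  subst h
  simp only [vec_1110_apply]
  constructor
  · intro i
    split_ifs
    · simp
    · rcases hε i with h | h <;> simp [h]
  · have : ∀ i, σ i = 3 ↔ i = σ.symm 3 := fun _ => σ.eq_symm_apply.symm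
    simp [hc, hε0, this, filter_ne']

lemma exists_sq_eq_and_card_eq_three_iff {x : Fin 4 → K} (hx : x ≠ 0) :
    (∃ c : K, (∀ i, x i = 0 ∨ x i ^ 2 = c ^ 2) ∧ #{i | x i ≠ 0} = 3) ↔
      ∃ (c : K) (σ : Equiv.Perm (Fin 4)) (ε : Fin 4 → K),
        (∀ i, ε i = 1 ∨ ε i = -1) ∧ x = fun i => c * ε i * (![1, 1, 1, 0] : Fin 4 → K) (σ i) :=
  ⟨fun ⟨_, hsq, hcard⟩ => exists_signed_perm_of_sq_eq hx hsq hcard,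
    fun ⟨c, _, _, hε, h⟩ => ⟨c, sq_eq_of_eq_signed_perm hx hε h⟩⟩

end SignedPermutation

def HasLeadingOne {R : Type*} [Zero R] [One R] {n : ℕ} (v : Fin n → R) : Prop :=
  ∃ j, v j = 1 ∧ ∀ i < j, v i = 0

instance {R : Type*} [Zero R] [One R] [DecidableEq R] {n : ℕ} :
    DecidablePred (HasLeadingOne (R := R) (n := n)) :=
  fun v => inferInstanceAs (Decidable (∃ j, v j = 1 ∧ ∀ i < j, v i = 0))

namespace HasLeadingOne

variable {n : ℕ}

lemma comp_iff {R S : Type*} [Zero R] [One R] [Zero S] [One S] {f : R → S}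
    (hf : Function.Injective f) (h0 : f 0 = 0) (h1 : f 1 = 1) {v : Fin n → R} :
    HasLeadingOne (f ∘ v) ↔ HasLeadingOne v := by
  simp only [HasLeadingOne, Function.comp_apply, ← h0, ← h1, hf.eq_iff]

variable {K : Type*} [Field K]

lemma ne_zero {v : Fin n → K} (hv : HasLeadingOne v) : v ≠ 0 := by
  obtain ⟨j, hj, -⟩ := hv
  exact Function.ne_iff.mpr ⟨j, by simp [hj]⟩

lemma eq_of_smul_eq {v w : Fin n → K} (hv : HasLeadingOne v) (hw : HasLeadingOne w) {a : K}
    (h : a • v = w) : v = w := by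
  obtain ⟨j, hvj, hv0⟩ := hv
  obtain ⟨k, hwk, hw0⟩ := hw
  have hw_apply : ∀ i, w i = a * v i := fun i => by simp [← h]
  have hjk : j = k := by
    rcases lt_trichotomy j k with hlt | heq | hgt
    · have ha : a = 0 := by simpa [hw_apply, hvj] using hw0 j hlt
      simp [hw_apply, ha] at hwk
    · exact heq
    · simp [hw_apply, hv0 k hgt] at hwk
  subst hjk
  have ha : a = 1 := by simpa [hw_apply, hvj] using hwk
  simpa [ha] using h

lemma exists_forall_sq_eq_iff {v : Fin n → K} (hv : HasLeadingOne v) :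
    (∃ c : K, ∀ i, v i = 0 ∨ v i ^ 2 = c ^ 2) ↔ ∀ i, v i = 0 ∨ v i ^ 2 = 1 := by
  refine ⟨fun ⟨c, hc⟩ => ?_, fun h => ⟨1, by simpa using h⟩⟩
  obtain ⟨j, hj, -⟩ := hv
  have hc1 : c ^ 2 = 1 := by simpa [hj, eq_comm] using hc j
  simpa [hc1] using hc

end HasLeadingOne

lemma exists_smul_hasLeadingOne {K : Type*} [Field K] {n : ℕ} {v : Fin n → K} (hv : v ≠ 0) :
    ∃ a : K, a ≠ 0 ∧ HasLeadingOne (a • v) := by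
  classical
  have hne : (univ.filter fun i => v i ≠ 0).Nonempty := by
    obtain ⟨i, hi⟩ := Function.ne_iff.mp hv
    exact ⟨i, by simpa using hi⟩
  set j := (univ.filter fun i => v i ≠ 0).min' hne
  have hj : v j ≠ 0 := by simpa using min'_mem _ hne
  refine ⟨(v j)⁻¹, inv_ne_zero hj, j, by simp [hj], fun i hi => ?_⟩
  have : v i = 0 := by
    by_contra h
    exact absurd (min'_le _ i (by simpa using h)) (not_le.mpr hi)
  simp [this]

lemma Projectivization.natCard_setOf_rep {K : Type*} [Field K] {n : ℕ} {P : (Fin n → K) → Prop}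
    (hP : ∀ (a : K) v, a ≠ 0 → (P (a • v) ↔ P v)) :
    Nat.card {p : Projectivization K (Fin n → K) | P p.rep} =
      Nat.card {v : Fin n → K | HasLeadingOne v ∧ P v} := by
  symm
  refine Nat.card_eq_of_bijective (fun v => ⟨mk K v.1 v.2.1.ne_zero, ?_⟩) ⟨?_, ?_⟩
  · obtain ⟨a, ha⟩ := exists_smul_eq_mk_rep K v.1 v.2.1.ne_zero
    show P (mk K _ _).rep
    rw [← ha, Units.smul_def, hP _ _ a.ne_zero]
    exact v.2.2
  · rintro ⟨v, hv⟩ ⟨w, hw⟩ h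
    obtain ⟨a, ha⟩ := (mk_eq_mk_iff' K _ _ _ _).mp (congrArg Subtype.val h)
    exact Subtype.ext (hw.1.eq_of_smul_eq hv.1 ha).symm
  · rintro ⟨p, hp⟩
    obtain ⟨a, ha, hlead⟩ := exists_smul_hasLeadingOne p.rep_nonzero
    refine ⟨⟨a • p.rep, hlead, (hP a _ ha).mpr hp⟩, Subtype.ext ?_⟩
    exact ((mk_eq_mk_iff' K _ _ _ _).mpr ⟨a, rfl⟩).trans p.mk_rep

section SignType

variable {K : Type*} [Field K]

lemma SignType.exists_cast_eq {z : K} (hz : z = 0 ∨ z ^ 2 = 1) : ∃ s : SignType, (s : K) = z := by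
  rcases hz with rfl | hz
  · exact ⟨0, SignType.coe_zero⟩
  · rcases sq_eq_one_iff.mp hz with rfl | rfl
    exacts [⟨1, SignType.coe_one⟩, ⟨-1, SignType.coe_neg_one⟩]

variable [CharZero K]

lemma SignType.cast_injective : Function.Injective (fun s : SignType => (s : K)) := by
  intro s t h
  cases s <;> cases t <;> first | rfl | norm_num at h

variable [DecidableEq K] {n : ℕ}

lemma image_signTypeCast_setOf_hasLeadingOne (k : ℕ) :
    (fun s : Fin n → SignType => fun i => (s i : K)) ''
        {s | HasLeadingOne s ∧ #{i | s i ≠ 0} = k} =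
      {v | HasLeadingOne v ∧ (∀ i, v i = 0 ∨ v i ^ 2 = 1) ∧ #{i | v i ≠ 0} = k} := by
  have hlead (s : Fin n → SignType) : HasLeadingOne (fun i => (s i : K)) ↔ HasLeadingOne s :=
    HasLeadingOne.comp_iff SignType.cast_injective SignType.coe_zero SignType.coe_one
  have hcard (s : Fin n → SignType) : #{i | (s i : K) ≠ 0} = #{i | s i ≠ 0} := by
    simp only [ne_eq, SignType.cast_injective.eq_iff' SignType.coe_zero]
  ext v
  constructor
  · rintro ⟨s, ⟨hs, hk⟩, rfl⟩
    refine ⟨(hlead s).mpr hs, fun i => ?_, (hcard s).trans hk⟩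
    obtain h | h | h := (s i).trichotomy <;> simp [h]
  · rintro ⟨hv, hsq, hk⟩
    choose s hs using fun i => SignType.exists_cast_eq (hsq i)
    obtain rfl : (fun i => (s i : K)) = v := funext hs
    exact ⟨s, ⟨(hlead s).mp hv, (hcard s).symm.trans hk⟩, rfl⟩

end SignType

lemma eval_pderiv_F (x : Fin 4 → ℂ) (i : Fin 4) :
    eval x (pderiv i F) = 4 / 3 * x i * (3 * x i ^ 2 - ∑ j, x j ^ 2) := by
  fin_cases i <;>
  · simp [F, f0, q, pderiv_X, Fin.sum_univ_four]
    ring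

lemma eval_smul_pderiv_F (a : ℂ) (x : Fin 4 → ℂ) (i : Fin 4) :
    eval (a • x) (pderiv i F) = a ^ 3 * eval x (pderiv i F) := by
  simp only [eval_pderiv_F, Pi.smul_apply, smul_eq_mul, mul_pow, ← mul_sum]
  ring

lemma forall_eval_pderiv_F_eq_zero_iff (x : Fin 4 → ℂ) :
    (∀ i, eval x (pderiv i F) = 0) ↔ ∀ i, x i = 0 ∨ 3 * x i ^ 2 = ∑ j, x j ^ 2 := by
  simp only [eval_pderiv_F, mul_eq_zero, sub_eq_zero]
  norm_num

lemma card_signVectors :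
    Nat.card {s : Fin 4 → SignType | HasLeadingOne s ∧ #{i | s i ≠ 0} = 3} = 16 := by
  rw [Nat.card_eq_fintype_card]
  decide

lemma forall_eval_pderiv_F_eq_zero_iff_exists_sq_eq {x : Fin 4 → ℂ} (hx : x ≠ 0) :
    (∀ i, eval x (pderiv i F) = 0) ↔
      ∃ c : ℂ, (∀ i, x i = 0 ∨ x i ^ 2 = c ^ 2) ∧ #{i | x i ≠ 0} = 3 := by
  simpa using (forall_eval_pderiv_F_eq_zero_iff x).trans
    (forall_eq_zero_or_mul_sq_eq_sum_sq_iff (m := 3) three_ne_zero hx)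

theorem stmt10 :
    (∀ x : Fin 4 → ℂ, x ≠ 0 →
      ((∀ i : Fin 4, eval x (pderiv i F) = 0) ↔
        ∃ (c : ℂ) (σ : Equiv.Perm (Fin 4)) (ε : Fin 4 → ℂ),
          (∀ i, ε i = 1 ∨ ε i = -1) ∧
          x = fun i => c * ε i * (![1, 1, 1, 0] : Fin 4 → ℂ) (σ i))) ∧
    Nat.card {p : Projectivization ℂ (Fin 4 → ℂ) |
      ∀ i : Fin 4, eval p.rep (pderiv i F) = 0} = 16 := by
  refine ⟨fun x hx => (forall_eval_pderiv_F_eq_zero_iff_exists_sq_eq hx).trans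
    (exists_sq_eq_and_card_eq_three_iff hx), ?_⟩
  have hnormal : {v : Fin 4 → ℂ | HasLeadingOne v ∧ ∀ i, eval v (pderiv i F) = 0} =
      {v | HasLeadingOne v ∧ (∀ i, v i = 0 ∨ v i ^ 2 = 1) ∧ #{i | v i ≠ 0} = 3} :=
    Set.ext fun v => and_congr_right fun hv => by
      rw [forall_eval_pderiv_F_eq_zero_iff_exists_sq_eq hv.ne_zero, exists_and_right,
        hv.exists_forall_sq_eq_iff]
  calc _ = Nat.card {v : Fin 4 → ℂ | HasLeadingOne v ∧ ∀ i, eval v (pderiv i F) = 0} :=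
        Projectivization.natCard_setOf_rep fun a v ha => by simp [eval_smul_pderiv_F, ha]
    _ = Nat.card {s : Fin 4 → SignType | HasLeadingOne s ∧ #{i | s i ≠ 0} = 3} := by
        rw [hnormal, ← image_signTypeCast_setOf_hasLeadingOne,
          Nat.card_image_of_injective
          fun s t h => funext fun i => SignType.cast_injective (congrFun h i)]
    _ = 16 := card_signVectors
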